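/- arXiv:0909.3251 — 3 statements merged into one kernel-verified Lean document; each statement's English description precedes it below -/
import Mathlib

section
/- Given a, λ > 0, a solution of the fixed point equation κ = nπ/(2a√(2λ)) − (i/(a√(2λ))) ln(κ + √(κ²+1)) inside the disc |κ| ≤ K (as in the contraction setup) can exist only if 1 + (nπ/2)² < 2a²λ. In particular resonances exist only for integers n with 1 ≤ n < (2/π)√(2a²λ − 1). -/
/-- A solution of the resonance fixed-point equation inside the
disc `|κ| ≤ K` (with `K` as in the contraction setup, i.e. a radius `K` with
`nπ/(2a√(2λ)) < K < √(1 − 1/(2a²λ))` exists) can exist only if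
`1 + (nπ/2)² < 2a²λ`; in particular resonances exist only for integers
`1 ≤ n < (2/π)√(2a²λ − 1)`. -/
theorem resonance_existence_condition
    (a lam : ℝ) (ha : 0 < a) (hlam : 0 < lam) (n : ℕ) (hn : 1 ≤ n)
    (hK : ∃ K : ℝ, (n : ℝ) * Real.pi / (2 * a * Real.sqrt (2 * lam)) < K ∧
      K < Real.sqrt (1 - 1 / (2 * a ^ 2 * lam))) :
    1 + ((n : ℝ) * Real.pi / 2) ^ 2 < 2 * a ^ 2 * lam ∧
    (n : ℝ) < (2 / Real.pi) * Real.sqrt (2 * a ^ 2 * lam - 1) := by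
  obtain ⟨K, h1, h2⟩ := hK
  have hn' : (1 : ℝ) ≤ (n : ℝ) := by exact_mod_cast hn
  have hpi := Real.pi_pos
  have hs2 : (0 : ℝ) < Real.sqrt (2 * lam) := Real.sqrt_pos.mpr (by linarith)
  have hden : (0 : ℝ) < 2 * a * Real.sqrt (2 * lam) := by positivity
  have hLpos : 0 < (n : ℝ) * Real.pi / (2 * a * Real.sqrt (2 * lam)) := by
    apply div_pos
    · nlinarith
    · exact hden
  have hlt : (n : ℝ) * Real.pi / (2 * a * Real.sqrt (2 * lam)) <
      Real.sqrt (1 - 1 / (2 * a ^ 2 * lam)) := lt_trans h1 h2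
  have hsqpos : 0 < Real.sqrt (1 - 1 / (2 * a ^ 2 * lam)) := lt_trans hLpos hlt
  have harg : 0 < 1 - 1 / (2 * a ^ 2 * lam) := by
    by_contra h
    push_neg at h
    have h0 : Real.sqrt (1 - 1 / (2 * a ^ 2 * lam)) = 0 :=
      Real.sqrt_eq_zero_of_nonpos h
    linarith
  -- square the inequality
  have hsq : ((n : ℝ) * Real.pi / (2 * a * Real.sqrt (2 * lam))) ^ 2 <
      1 - 1 / (2 * a ^ 2 * lam) := by
    have := Real.sq_sqrt (le_of_lt harg)
    nlinarith [hsqpos, hLpos]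
  have hss : Real.sqrt (2 * lam) ^ 2 = 2 * lam := Real.sq_sqrt (by linarith)
  have hL2 : ((n : ℝ) * Real.pi / (2 * a * Real.sqrt (2 * lam))) ^ 2 =
      ((n : ℝ) * Real.pi / 2) ^ 2 / (2 * a ^ 2 * lam) := by
    rw [div_pow, div_pow, mul_pow, mul_pow, hss]
    field_simp
  rw [hL2] at hsq
  have hspos : (0 : ℝ) < 2 * a ^ 2 * lam := by positivity
  have hmain : 1 + ((n : ℝ) * Real.pi / 2) ^ 2 < 2 * a ^ 2 * lam := by
    have := (div_lt_iff₀ hspos).mp hsq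
    have h1' : 1 / (2 * a ^ 2 * lam) * (2 * a ^ 2 * lam) = 1 := by
      field_simp
    nlinarith
  refine ⟨hmain, ?_⟩
  have h3 : (n : ℝ) * Real.pi / 2 < Real.sqrt (2 * a ^ 2 * lam - 1) := by
    rw [show (n : ℝ) * Real.pi / 2 = Real.sqrt (((n : ℝ) * Real.pi / 2) ^ 2) by
      rw [Real.sqrt_sq (by positivity)]]
    exact Real.sqrt_lt_sqrt (by positivity) (by linarith)
  calc (n : ℝ) = (2 / Real.pi) * ((n : ℝ) * Real.pi / 2) := by field_simp
    _ < (2 / Real.pi) * Real.sqrt (2 * a ^ 2 * lam - 1) := by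
        apply mul_lt_mul_of_pos_left h3 (by positivity)
end

section
/- Let 0 ≤ d ≤ c be real numbers. For all φ ∈ [0, 2π), the point √(c + d e^{iφ}) lies in the closed annulus centered at √c with inner radius √(c+d) − √c and outer radius √c − √(c−d); that is, √(c+d) − √c ≤ |√(c + d e^{iφ}) − √c| ≤ √c − √(c−d). -/
/-!
Put `z = √w` with `w = c + d e^{iφ}`. Since `z² - c = d e^{iφ}`, the distances satisfy
`|z - √c| · |z + √c| = d`, so it suffices to bound `|z + √c|` on both sides:
`|z + √c| ≤ |z| + √c ≤ √(c + d) + √c` and, as `Re z = √((|w| + Re w)/2) ≥ √(Re w) ≥ √(c - d)`,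
`|z + √c| ≥ Re z + √c ≥ √(c - d) + √c`. Dividing `d` by these bounds gives
`d / (√(c + d) + √c) = √(c + d) - √c` and `d / (√(c - d) + √c) = √c - √(c - d)`.
-/

open Complex

theorem Real.sqrt_sub_sqrt_eq_div {x y : ℝ} (hx : 0 ≤ x) (hy : 0 ≤ y) :
    √x - √y = (x - y) / (√x + √y) := by
  by_cases h : √x + √y = 0
  · obtain ⟨hx0, hy0⟩ := (add_eq_zero_iff_of_nonneg (Real.sqrt_nonneg x) (Real.sqrt_nonneg y)).1 h
    rw [Real.sqrt_eq_zero hx] at hx0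
    rw [Real.sqrt_eq_zero hy] at hy0
    simp [hx0, hy0]
  · rw [eq_div_iff h]
    linear_combination Real.sq_sqrt hx - Real.sq_sqrt hy

namespace Complex

theorem norm_cpow_inv_two (w : ℂ) : ‖w ^ (2⁻¹ : ℂ)‖ = √‖w‖ := by
  simpa [Real.sqrt_eq_rpow] using norm_cpow_inv_nat w 2

theorem sqrt_re_le_re_cpow_inv_two (w : ℂ) : √w.re ≤ (w ^ (2⁻¹ : ℂ)).re := by
  rw [cpow_inv_two_re]
  exact Real.sqrt_le_sqrt (by linarith [re_le_norm w])

theorem norm_cpow_inv_two_sub_mul_norm_add (w s : ℂ) :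
    ‖w ^ (2⁻¹ : ℂ) - s‖ * ‖w ^ (2⁻¹ : ℂ) + s‖ = ‖w - s ^ 2‖ := by
  rw [← norm_mul, mul_comm, ← sq_sub_sq, cpow_ofNat_inv_pow]

theorem norm_cpow_inv_two_add_ofReal_le (w : ℂ) {s : ℝ} (hs : 0 ≤ s) :
    ‖w ^ (2⁻¹ : ℂ) + s‖ ≤ √‖w‖ + s := by
  simpa [norm_cpow_inv_two, abs_of_nonneg hs] using norm_add_le (w ^ (2⁻¹ : ℂ)) s

theorem sqrt_re_add_le_norm_cpow_inv_two_add_ofReal (w : ℂ) (s : ℝ) :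
    √w.re + s ≤ ‖w ^ (2⁻¹ : ℂ) + s‖ := calc
  √w.re + s ≤ (w ^ (2⁻¹ : ℂ)).re + s := by gcongr; exact sqrt_re_le_re_cpow_inv_two w
  _ = (w ^ (2⁻¹ : ℂ) + s).re := by simp
  _ ≤ ‖w ^ (2⁻¹ : ℂ) + s‖ := re_le_norm _

theorem norm_ofReal_mul_exp_I_mul (d φ : ℝ) : ‖(d : ℂ) * exp (I * φ)‖ = |d| := by
  rw [norm_mul, mul_comm I, norm_exp_ofReal_mul_I, mul_one, norm_real, Real.norm_eq_abs]

theorem norm_ofReal_add_ofReal_mul_exp_I_mul_le (c d φ : ℝ) :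
    ‖(c : ℂ) + d * exp (I * φ)‖ ≤ |c| + |d| := by
  simpa [norm_ofReal_mul_exp_I_mul] using norm_add_le (c : ℂ) (d * exp (I * φ))

theorem sub_abs_le_re_ofReal_add_ofReal_mul_exp_I_mul (c d φ : ℝ) :
    c - |d| ≤ ((c : ℂ) + d * exp (I * φ)).re := by
  have := abs_re_le_norm ((d : ℂ) * exp (I * φ))
  rw [norm_ofReal_mul_exp_I_mul] at this
  simp only [add_re, ofReal_re]
  linarith [neg_abs_le ((d : ℂ) * exp (I * φ)).re]

end Complex

theorem sqrt_of_circle_in_annulus_general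
    (c d : ℝ) (hd0 : 0 ≤ d) (hdc : d ≤ c)
    (φ : ℝ) :
    Real.sqrt (c + d) - Real.sqrt c ≤
      ‖(((c : ℂ) + (d : ℂ) * Complex.exp (Complex.I * φ)) ^ (1 / 2 : ℂ)) -
        ((Real.sqrt c : ℝ) : ℂ)‖ ∧
    ‖(((c : ℂ) + (d : ℂ) * Complex.exp (Complex.I * φ)) ^ (1 / 2 : ℂ)) -
        ((Real.sqrt c : ℝ) : ℂ)‖ ≤ Real.sqrt c - Real.sqrt (c - d) := by
  obtain rfl | hc := (hd0.trans hdc).eq_or_lt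
  · obtain rfl : d = 0 := le_antisymm hdc hd0
    simp
  set w : ℂ := c + d * exp (I * φ)
  rw [one_div]
  have hsum_le : ‖w ^ (2⁻¹ : ℂ) + √c‖ ≤ √(c + d) + √c := by
    refine (norm_cpow_inv_two_add_ofReal_le w (Real.sqrt_nonneg c)).trans ?_
    gcongr
    simpa [abs_of_pos hc, abs_of_nonneg hd0] using norm_ofReal_add_ofReal_mul_exp_I_mul_le c d φ
  have hsum_ge : √(c - d) + √c ≤ ‖w ^ (2⁻¹ : ℂ) + √c‖ := by
    refine le_trans ?_ (sqrt_re_add_le_norm_cpow_inv_two_add_ofReal w √c)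
    gcongr
    simpa only [abs_of_nonneg hd0] using sub_abs_le_re_ofReal_add_ofReal_mul_exp_I_mul c d φ
  have hlow_pos : 0 < √(c - d) + √c := by positivity [Real.sqrt_pos.2 hc]
  have hsum_pos := hlow_pos.trans_le hsum_ge
  have hdiff : ‖w ^ (2⁻¹ : ℂ) - √c‖ = d / ‖w ^ (2⁻¹ : ℂ) + √c‖ := by
    rw [eq_div_iff hsum_pos.ne', norm_cpow_inv_two_sub_mul_norm_add, ← ofReal_pow,
      Real.sq_sqrt hc.le]
    simp [w, abs_of_nonneg hd0]
  rw [hdiff]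
  constructor
  · rw [Real.sqrt_sub_sqrt_eq_div (by linarith) hc.le, add_sub_cancel_left]
    exact div_le_div_of_nonneg_left hd0 hsum_pos hsum_le
  · rw [Real.sqrt_sub_sqrt_eq_div hc.le (by linarith), sub_sub_cancel, add_comm (√c)]
    exact div_le_div_of_nonneg_left hd0 hlow_pos hsum_ge

/-- For `0 ≤ d ≤ c` and `φ ∈ [0, 2π)`, the point
`√(c + d e^{iφ})` (principal square root) lies in the closed annulus centered
at `√c` with inner radius `√(c+d) − √c` and outer radius `√c − √(c−d)`. -/
theorem sqrt_of_circle_in_annulus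
    (c d : ℝ) (hd0 : 0 ≤ d) (hdc : d ≤ c)
    (φ : ℝ) (hφ : φ ∈ Set.Ico 0 (2 * Real.pi)) :
    Real.sqrt (c + d) - Real.sqrt c ≤
      ‖(((c : ℂ) + (d : ℂ) * Complex.exp (Complex.I * φ)) ^ (1 / 2 : ℂ)) -
        ((Real.sqrt c : ℝ) : ℂ)‖ ∧
    ‖(((c : ℂ) + (d : ℂ) * Complex.exp (Complex.I * φ)) ^ (1 / 2 : ℂ)) -
        ((Real.sqrt c : ℝ) : ℂ)‖ ≤ Real.sqrt c - Real.sqrt (c - d) :=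
  sqrt_of_circle_in_annulus_general c d hd0 hdc φ
end

section
/- For the square-well potential, the symmetric Gamow function G (piecewise: (z̃/(z̃+z)) e^{iz̃a} e^{-iz(x+a)} for x < −a, cos(z̃x) for |x| ≤ a, (z̃/(z̃+z)) e^{iz̃a} e^{iz(x−a)} for x > a) is C¹ on ℝ and solves −½G'' + λχ_{[-a,a]}G = (z²/2)G away from x = ±a, provided z satisfies the odd resonance condition e^{2iaz̃}(z̃−z)/(z̃+z) = 1 with z̃ = √(z² − 2λ). -/
/-!
On each of the three regions `G` is a smooth function solving the equation there: the exterior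
pieces because `(± i z)² = -z²`, the interior one because `z̃² = z² - 2λ`. Writing
`e = exp (i z̃ a)`, the resonance condition reads `e² (z̃ - z) = z̃ + z`, and this is exactly what
makes `cos (z̃ a)` and `z̃ sin (z̃ a)` equal the exterior amplitude and (up to the factor `-i z`)
its derivative, so the values and first derivatives of the pieces agree at `x = ±a`. A function
glued from `C¹` pieces with matching values and derivatives is `C¹`.
-/

open Set Filter Topology Complex

section Gluing

variable {E : Type*} [NormedAddCommGroup E] [NormedSpace ℝ E] {f u v w : ℝ → E} {c l r : ℝ}

theorem hasDerivAt_of_eq_Iio_Ici {d : E} (hfu : ∀ x < c, f x = u x)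
    (hfv : ∀ x, c ≤ x → f x = v x) (hc : u c = v c) (hu : HasDerivAt u d c)
    (hv : HasDerivAt v d c) : HasDerivAt f d c := by
  have hfc : f c = v c := hfv c le_rfl
  have hleft : HasDerivWithinAt f d (Iic c) c := by
    refine hu.hasDerivWithinAt.congr (fun x hx => ?_) (hfc.trans hc.symm)
    rcases (mem_Iic.mp hx).lt_or_eq with hx | rfl
    · exact hfu x hx
    · exact hfc.trans hc.symm
  have hright : HasDerivWithinAt f d (Ici c) c := hv.hasDerivWithinAt.congr hfv hfc
  simpa [Iic_union_Ici, hasDerivWithinAt_univ] using hleft.union hright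

theorem contDiff_one_of_eq_Iio_Ici (hu : ContDiff ℝ 1 u) (hv : ContDiff ℝ 1 v)
    (hfu : ∀ x < c, f x = u x) (hfv : ∀ x, c ≤ x → f x = v x) (hc : u c = v c)
    (hd : deriv u c = deriv v c) : ContDiff ℝ 1 f := by
  have hu' := hu.differentiable one_ne_zero
  have hv' := hv.differentiable one_ne_zero
  have hf : ∀ x, HasDerivAt f (if x ≤ c then deriv u x else deriv v x) x := by
    intro x
    rcases lt_trichotomy x c with hx | rfl | hx
    · rw [if_pos hx.le]
      exact (hu' x).hasDerivAt.congr_of_eventuallyEq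
        (eventually_of_mem (Iio_mem_nhds hx) hfu)
    · rw [if_pos le_rfl]
      exact hasDerivAt_of_eq_Iio_Ici hfu hfv hc (hu' x).hasDerivAt (hd ▸ (hv' x).hasDerivAt)
    · rw [if_neg hx.not_ge]
      exact (hv' x).hasDerivAt.congr_of_eventuallyEq
        (eventually_of_mem (Ioi_mem_nhds hx) fun y hy => hfv y hy.le)
  rw [contDiff_one_iff_deriv, funext fun x => (hf x).deriv]
  exact ⟨fun x => (hf x).differentiableAt, (hu.continuous_deriv le_rfl).if_le
    (hv.continuous_deriv le_rfl) continuous_id continuous_const fun x hx => hx ▸ hd⟩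

theorem contDiff_one_of_eq_Iio_Icc_Ioi (hlr : l < r) (hu : ContDiff ℝ 1 u)
    (hv : ContDiff ℝ 1 v) (hw : ContDiff ℝ 1 w) (hfu : ∀ x < l, f x = u x)
    (hfv : ∀ x ∈ Icc l r, f x = v x) (hfw : ∀ x > r, f x = w x) (hl : u l = v l)
    (hr : v r = w r) (hl' : deriv u l = deriv v l) (hr' : deriv v r = deriv w r) :
    ContDiff ℝ 1 f := by
  set g : ℝ → E := fun x => if x < r then v x else w x
  have hvg : v =ᶠ[𝓝 l] g := eventually_of_mem (Iio_mem_nhds hlr) fun x hx => (if_pos hx).symm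
  refine contDiff_one_of_eq_Iio_Ici hu ?_ hfu (fun x hx => ?_) (hl.trans hvg.eq_of_nhds)
    (hl'.trans hvg.deriv_eq)
  · exact contDiff_one_of_eq_Iio_Ici hv hw (fun x hx => if_pos hx) (fun x hx => if_neg hx.not_gt)
      hr hr'
  · rcases lt_or_ge x r with hxr | hxr
    · exact (hfv x ⟨hx, hxr.le⟩).trans (if_pos hxr).symm
    · refine .trans ?_ (if_neg hxr.not_gt).symm
      rcases hxr.lt_or_eq with hxr | rfl
      · exact hfw x hxr
      · exact (hfv r ⟨hx, le_rfl⟩).trans hr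

end Gluing

section Pieces

variable (C k s : ℂ)

theorem contDiff_const_mul_cexp_mul_sub {n : WithTop ℕ∞} :
    ContDiff ℝ n fun t : ℝ => C * cexp (k * (t - s)) := by
  have : ContDiff ℝ n ((↑) : ℝ → ℂ) := ofRealCLM.contDiff
  fun_prop

theorem contDiff_cos_mul {n : WithTop ℕ∞} : ContDiff ℝ n fun t : ℝ => cos (k * t) :=
  (contDiff_cos.restrict_scalars ℝ).comp (contDiff_const.mul ofRealCLM.contDiff)

theorem hasDerivAt_const_mul_cexp_mul_sub (x : ℝ) :
    HasDerivAt (fun t : ℝ => C * cexp (k * (t - s))) (k * C * cexp (k * (x - s))) x := by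
  have h := ((((hasDerivAt_id (x : ℂ)).sub_const s).const_mul k).cexp).const_mul C
  simp only [id, mul_one] at h
  convert h.comp_ofReal using 1
  ring

theorem deriv_const_mul_cexp_mul_sub :
    deriv (fun t : ℝ => C * cexp (k * (t - s))) = fun t : ℝ => k * C * cexp (k * (t - s)) :=
  funext fun x => (hasDerivAt_const_mul_cexp_mul_sub C k s x).deriv

theorem deriv_deriv_const_mul_cexp_mul_sub :
    deriv (deriv fun t : ℝ => C * cexp (k * (t - s))) =
      fun t : ℝ => k ^ 2 * (C * cexp (k * (t - s))) := by
  rw [deriv_const_mul_cexp_mul_sub, deriv_const_mul_cexp_mul_sub]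
  funext t
  ring

theorem hasDerivAt_cos_mul (x : ℝ) :
    HasDerivAt (fun t : ℝ => cos (k * t)) (-(k * sin (k * x))) x := by
  have h := ((hasDerivAt_id (x : ℂ)).const_mul k).ccos
  simp only [id, mul_one] at h
  convert h.comp_ofReal using 1
  ring

theorem hasDerivAt_sin_mul (x : ℝ) :
    HasDerivAt (fun t : ℝ => sin (k * t)) (k * cos (k * x)) x := by
  have h := ((hasDerivAt_id (x : ℂ)).const_mul k).csin
  simp only [id, mul_one] at h
  convert h.comp_ofReal using 1
  ring

theorem deriv_cos_mul : deriv (fun t : ℝ => cos (k * t)) = fun t : ℝ => -(k * sin (k * t)) :=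
  funext fun x => (hasDerivAt_cos_mul k x).deriv

theorem deriv_deriv_cos_mul :
    deriv (deriv fun t : ℝ => cos (k * t)) = fun t : ℝ => -(k ^ 2 * cos (k * t)) := by
  rw [deriv_cos_mul]
  funext x
  exact (((hasDerivAt_sin_mul k x).const_mul k).neg.deriv).trans (by ring)

end Pieces

theorem cos_eq_and_mul_sin_eq_of_resonance {a z zt : ℂ} (hsum : zt + z ≠ 0)
    (hres : cexp (2 * I * a * zt) * (zt - z) / (zt + z) = 1) :
    cos (zt * a) = zt / (zt + z) * cexp (I * zt * a) ∧
      zt * sin (zt * a) = -(I * z) * (zt / (zt + z) * cexp (I * zt * a)) := by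
  set e := cexp (I * zt * a)
  have he : e ≠ 0 := exp_ne_zero _
  have hres' : e ^ 2 * (zt - z) = zt + z := by
    rwa [div_eq_one_iff_eq hsum, show 2 * I * a * zt = (2 : ℕ) * (I * zt * a) by push_cast; ring,
      exp_nat_mul] at hres
  have hpos : cexp (zt * a * I) = e := congrArg cexp (by ring)
  have hneg : cexp (-(zt * a) * I) = e⁻¹ := by
    rw [← exp_neg]; exact congrArg cexp (by ring)
  constructor
  · rw [cos, hpos, hneg]
    field_simp
    linear_combination -hres'
  · rw [sin, hpos, hneg]
    field_simp
    linear_combination (-zt) * hres'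

theorem gamow_function_is_C1_and_solves_schroedinger_general
    (a lam : ℝ) (ha : 0 < a)
    (z zt : ℂ) (hzt : zt ^ 2 = z ^ 2 - 2 * (lam : ℂ))
    (hsum : zt + z ≠ 0)
    (hres : Complex.exp (2 * Complex.I * a * zt) * (zt - z) / (zt + z) = 1)
    (G : ℝ → ℂ)
    (hG1 : ∀ x : ℝ, x < -a → G x =
      zt / (zt + z) * Complex.exp (Complex.I * zt * a) *
        Complex.exp (-(Complex.I * z * (x + a))))
    (hG2 : ∀ x : ℝ, |x| ≤ a → G x = Complex.cos (zt * x))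
    (hG3 : ∀ x : ℝ, a < x → G x =
      zt / (zt + z) * Complex.exp (Complex.I * zt * a) *
        Complex.exp (Complex.I * z * (x - a))) :
    ContDiff ℝ 1 G ∧
    ∀ x : ℝ, x ≠ -a → x ≠ a →
      -(1 / 2 : ℂ) * deriv (deriv G) x +
          (lam : ℂ) * Set.indicator (Set.Icc (-a) a) (fun _ => (1 : ℂ)) x * G x =
        (z ^ 2 / 2) * G x := by
  obtain ⟨hcos, hsin⟩ := cos_eq_and_mul_sin_eq_of_resonance hsum hres
  set C := zt / (zt + z) * cexp (I * zt * a)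
  have hL : ∀ x < -a, G x = C * cexp (-(I * z) * (x - (-a : ℂ))) := fun x hx =>
    (hG1 x hx).trans (by ring_nf)
  have hM : ∀ x ∈ Icc (-a) a, G x = cos (zt * x) := fun x hx => hG2 x (abs_le.2 hx)
  have hR : ∀ x > a, G x = C * cexp (I * z * (x - a)) := hG3
  refine ⟨contDiff_one_of_eq_Iio_Icc_Ioi (by linarith)
    (contDiff_const_mul_cexp_mul_sub ..) (contDiff_cos_mul _) (contDiff_const_mul_cexp_mul_sub ..)
    hL hM hR ?_ ?_ ?_ ?_, fun x hx₁ hx₂ => ?_⟩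
  · simp [hcos]
  · simp [hcos]
  · rw [deriv_const_mul_cexp_mul_sub, deriv_cos_mul]
    simp [hsin]
  · rw [deriv_const_mul_cexp_mul_sub, deriv_cos_mul]
    simp [hsin]
  rcases hx₁.lt_or_gt with hx | hx
  · rw [(eventuallyEq_of_mem (Iio_mem_nhds hx) hL).deriv.deriv_eq,
      deriv_deriv_const_mul_cexp_mul_sub, hL x hx, indicator_of_notMem (fun h => hx.not_ge h.1)]
    linear_combination (-(1 / 2 : ℂ) * z ^ 2 * C * cexp (-(I * z) * (x - (-a : ℂ)))) * I_sq
  rcases hx₂.lt_or_gt with hx' | hx'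
  · have hMx : G =ᶠ[𝓝 x] fun t : ℝ => cos (zt * t) :=
      eventuallyEq_of_mem (Ioo_mem_nhds hx hx') fun y hy => hM y (Ioo_subset_Icc_self hy)
    rw [hMx.deriv.deriv_eq, deriv_deriv_cos_mul, hM x ⟨hx.le, hx'.le⟩,
      indicator_of_mem (show x ∈ Icc (-a) a from ⟨hx.le, hx'.le⟩)]
    linear_combination (cos (zt * x) / 2) * hzt
  · rw [(eventuallyEq_of_mem (Ioi_mem_nhds hx') hR).deriv.deriv_eq,
      deriv_deriv_const_mul_cexp_mul_sub, hR x hx', indicator_of_notMem (fun h => hx'.not_ge h.2)]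
    linear_combination (-(1 / 2 : ℂ) * z ^ 2 * C * cexp (I * z * (x - a))) * I_sq

/-- The symmetric Gamow function of the square well, defined
piecewise by `(z̃/(z̃+z)) e^{iz̃a} e^{-iz(x+a)}` for `x < −a`, `cos(z̃x)` for
`|x| ≤ a`, and `(z̃/(z̃+z)) e^{iz̃a} e^{iz(x−a)}` for `x > a`, is `C¹` on `ℝ`
and solves `−½G'' + λχ_{[-a,a]}G = (z²/2)G` away from `x = ±a`, provided `z`
satisfies the odd resonance condition `e^{2iaz̃}(z̃−z)/(z̃+z) = 1` with
`z̃ = √(z² − 2λ)`. -/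
theorem gamow_function_is_C1_and_solves_schroedinger
    (a lam : ℝ) (ha : 0 < a) (hlam : 0 < lam)
    (z zt : ℂ) (him : z.im < 0) (hzt : zt ^ 2 = z ^ 2 - 2 * (lam : ℂ))
    (hsum : zt + z ≠ 0)
    (hres : Complex.exp (2 * Complex.I * a * zt) * (zt - z) / (zt + z) = 1)
    (G : ℝ → ℂ)
    (hG1 : ∀ x : ℝ, x < -a → G x =
      zt / (zt + z) * Complex.exp (Complex.I * zt * a) *
        Complex.exp (-(Complex.I * z * (x + a))))
    (hG2 : ∀ x : ℝ, |x| ≤ a → G x = Complex.cos (zt * x))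
    (hG3 : ∀ x : ℝ, a < x → G x =
      zt / (zt + z) * Complex.exp (Complex.I * zt * a) *
        Complex.exp (Complex.I * z * (x - a))) :
    ContDiff ℝ 1 G ∧
    ∀ x : ℝ, x ≠ -a → x ≠ a →
      -(1 / 2 : ℂ) * deriv (deriv G) x +
          (lam : ℂ) * Set.indicator (Set.Icc (-a) a) (fun _ => (1 : ℂ)) x * G x =
        (z ^ 2 / 2) * G x :=
  gamow_function_is_C1_and_solves_schroedinger_general a lam ha z zt hzt hsum hres G hG1 hG2 hG3
end
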